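/- arXiv:1609.02790 — 2 statements merged into one kernel-verified Lean document; each statement's English description precedes it below -/
import Mathlib

section
/- Let P be a labeled poset on [p] and s : [p] → ℤ₊. Then the lecture hall order cone C(P,s) is the disjoint union, over all linear extensions π ∈ L(P), of the cones C(P_π, s), where P_π is the labeled chain π₁ ≺ π₂ ≺ ⋯ ≺ π_p. -/
/-!
A function `f` lies in the chain cone `C(P_σ, s)` exactly when `σ` is the permutation sorting the
ratios `f x / s x`, ties broken by the labels (`Tuple.eq_sort_iff`). Hence `f` lies in at most one
chain cone; if `f ∈ C(P, s)`, this sorting permutation is a linear extension of `P`; and the chain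
of a linear extension refines `P`, so its cone lies in `C(P, s)`.
-/

noncomputable section

/-- `f : Fin p → ℝ` is a lecture hall `(P,s)`-partition, where `lt` is the strict order
of the labeled poset and labels are compared via the usual order on `Fin p`. -/
def IsLHPart {p : ℕ} (lt : Fin p → Fin p → Prop) (s : Fin p → ℕ) (f : Fin p → ℝ) : Prop :=
  (∀ x y, lt x y → f x / (s x : ℝ) ≤ f y / (s y : ℝ)) ∧
  ∀ x y, lt x y → y < x → f x / (s x : ℝ) < f y / (s y : ℝ)

/-- The lecture hall order cone `C(P,s)`. -/
def Cone {p : ℕ} (lt : Fin p → Fin p → Prop) (s : Fin p → ℕ) : Set (Fin p → ℝ) :=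
  {f | IsLHPart lt s f ∧ ∀ x, 0 ≤ f x / (s x : ℝ)}

/-- The strict order of the labeled chain `P_π : π₁ ≺ π₂ ≺ ⋯ ≺ π_p`. -/
def chainLt {p : ℕ} (π : Equiv.Perm (Fin p)) : Fin p → Fin p → Prop :=
  fun x y => π.symm x < π.symm y

/-- The set of linear extensions (Jordan–Hölder set) of a labeled poset. -/
def LinExt {p : ℕ} (P : PartialOrder (Fin p)) : Set (Equiv.Perm (Fin p)) :=
  {π | ∀ i j, P.le (π i) (π j) → i ≤ j}

namespace IsLHPart

variable {p : ℕ} {s : Fin p → ℕ} {f : Fin p → ℝ}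

theorem mono {lt lt' : Fin p → Fin p → Prop} (h : ∀ x y, lt x y → lt' x y)
    (hf : IsLHPart lt' s f) : IsLHPart lt s f :=
  ⟨fun x y hxy => hf.1 x y (h x y hxy), fun x y hxy => hf.2 x y (h x y hxy)⟩

theorem chainLt_iff {σ : Equiv.Perm (Fin p)} :
    IsLHPart (chainLt σ) s f ↔ σ = Tuple.sort fun x => f x / (s x : ℝ) := by
  have hchain : ∀ i j, chainLt σ (σ i) (σ j) ↔ i < j := by simp [chainLt]
  rw [Tuple.eq_sort_iff]
  refine ⟨fun ⟨hle, hlt⟩ => ⟨fun i j hij => ?_, fun i j hij heq => ?_⟩,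
    fun ⟨hmono, htie⟩ => ⟨fun x y hxy => ?_, fun x y hxy hyx => ?_⟩⟩
  · rcases hij.eq_or_lt with rfl | hij
    · rfl
    · exact hle _ _ ((hchain i j).2 hij)
  · by_contra! hji
    exact (hlt _ _ ((hchain i j).2 hij) (hji.lt_of_ne (σ.injective.ne hij.ne'))).ne heq
  · simpa using hmono (le_of_lt hxy)
  · obtain ⟨i, rfl⟩ := σ.surjective x
    obtain ⟨j, rfl⟩ := σ.surjective y
    have hij := (hchain i j).1 hxy
    exact (hmono hij.le).lt_of_ne fun heq => (htie i j hij heq).not_gt hyx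

end IsLHPart

theorem chainLt_of_mem_linExt {p : ℕ} {P : PartialOrder (Fin p)} {π : Equiv.Perm (Fin p)}
    (hπ : π ∈ LinExt P) {x y : Fin p} (hxy : P.lt x y) : chainLt π x y := by
  have hle := hπ (π.symm x) (π.symm y)
  simp only [Equiv.apply_symm_apply] at hle
  have hne : π.symm x ≠ π.symm y := by
    intro h
    rw [π.symm.injective h] at hxy
    exact @lt_irrefl _ P.toPreorder _ hxy
  have := hle (@le_of_lt _ P.toPreorder _ _ hxy)
  unfold chainLt
  omega

theorem sort_mem_linExt {p : ℕ} {P : PartialOrder (Fin p)} {s : Fin p → ℕ} {f : Fin p → ℝ}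
    (hf : IsLHPart P.lt s f) : (Tuple.sort fun x => f x / (s x : ℝ)) ∈ LinExt P := by
  set σ := Tuple.sort fun x => f x / (s x : ℝ)
  have hσ : IsLHPart (chainLt σ) s f := IsLHPart.chainLt_iff.2 rfl
  intro i j hij
  by_contra! hji
  have hne : σ i ≠ σ j := σ.injective.ne (Fin.ne_of_gt hji)
  have hlt : P.lt (σ i) (σ j) := @lt_of_le_of_ne _ P _ _ hij hne
  have hc : chainLt σ (σ j) (σ i) := by simpa [chainLt] using hji
  rcases Fin.lt_or_lt_of_ne hne with h | h
  · exact (hσ.2 _ _ hc h).not_ge (hf.1 _ _ hlt)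
  · exact (hf.2 _ _ hlt h).not_ge (hσ.1 _ _ hc)

theorem lecture_hall_cone_decomposition_general {p : ℕ} (P : PartialOrder (Fin p))
    (s : Fin p → ℕ) :
    Cone P.lt s = (⋃ π ∈ LinExt P, Cone (chainLt π) s) ∧
    (LinExt P).PairwiseDisjoint fun π => Cone (chainLt π) s := by
  refine ⟨Set.ext fun f => ⟨fun ⟨hf, hnonneg⟩ => ?_, fun hf => ?_⟩, ?_⟩
  · exact Set.mem_biUnion (sort_mem_linExt hf) ⟨IsLHPart.chainLt_iff.2 rfl, hnonneg⟩
  · obtain ⟨π, hπ, hfπ, hnonneg⟩ := Set.mem_iUnion₂.1 hf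
    exact ⟨hfπ.mono fun x y => chainLt_of_mem_linExt hπ, hnonneg⟩
  · intro π _ σ _ hne
    refine Set.disjoint_left.2 fun f hπ hσ => hne ?_
    exact (IsLHPart.chainLt_iff.1 hπ.1).trans (IsLHPart.chainLt_iff.1 hσ.1).symm

/-- The lecture hall order cone `C(P,s)` is the disjoint union of the cones `C(P_π,s)`
over all linear extensions `π ∈ L(P)`. -/
theorem lecture_hall_cone_decomposition {p : ℕ} (P : PartialOrder (Fin p))
    (s : Fin p → ℕ) (hs : ∀ x, 0 < s x) :
    Cone P.lt s = (⋃ π ∈ LinExt P, Cone (chainLt π) s) ∧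
    (LinExt P).PairwiseDisjoint fun π => Cone (chainLt π) s :=
  lecture_hall_cone_decomposition_general P s
end
end

section
/- For positive integers p and k, as formal power series in t with coefficients in ℤ[q], one has (∏_{i=0}^{p} (1 − t·q^{ki})) · ∑_{n≥0} [kn+1]_q^p t^n = ∑_{τ ∈ ℤ_k ≀ S_p} t^{des_s(τ)} q^{fmaj(τ)}, i.e., ∑_{n≥0} [kn+1]_q^p t^n = (∑_{τ ∈ ℤ_k ≀ S_p} t^{des_s(τ)} q^{fmaj(τ)}) / ∏_{i=0}^{p} (1 − t q^{ki}). -/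
/-!
Expand `[kn+1]_q^p = ∑_f q^{|f|}` over `f : [p] → {0, …, kn}` and write `f j = k * g j + r j`
with `r j < k`. Let `σ` sort the positions lexicographically by `(g, r, index)`. For the
element `(σ, r)` of `ℤ_k ≀ S_p`, a position `i ∈ D₁` is a descent exactly when the key
`(r, index)` drops from `σ_i` to `σ_{i+1}`, so `g ∘ σ` must strictly increase there. Hence
`h c := g (σ c) - #{descents left of c}` is weakly increasing, and `f` can be recovered from
`((σ, r), h)`. The bound `f ≤ kn` becomes `h_last + des_s ≤ n`, because the extra descent at `p`
is exactly the case `r (σ_p) > 0`. Also `|f| = fmaj + k |h|`. So `f ↦ ((σ, r), h)` is a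
bijection onto the pairs in which `h` is weakly increasing and bounded by `n - des_s`.
Conditioning on the last value shows that these `h` have generating function
`∑_m t^m ∑_{h ≤ m} x^{|h|} = ∏_{i=0}^{p} (1 - x^i t)⁻¹`, and here `x = q^k`.
-/

open scoped Classical

noncomputable section

/-- Descent of `τ = (π,r) ∈ ℤ_k ≀ S_p` at (1-based) position `i`: either
`π_i < π_{i+1}` and `r(π_i) > r(π_{i+1})`, or `π_i > π_{i+1}` and `r(π_i) ≥ r(π_{i+1})`. -/
def IsDescZk {p : ℕ} (π : Equiv.Perm (Fin p)) (r : Fin p → ℕ) (i : ℕ) : Prop :=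
  ∃ (h1 : i - 1 < p) (h2 : i < p),
    ((π ⟨i - 1, h1⟩ < π ⟨i, h2⟩ ∧ r (π ⟨i - 1, h1⟩) > r (π ⟨i, h2⟩)) ∨
     (π ⟨i, h2⟩ < π ⟨i - 1, h1⟩ ∧ r (π ⟨i - 1, h1⟩) ≥ r (π ⟨i, h2⟩)))

/-- `D₁(τ) ⊆ [p-1]`. -/
def D1Zk {p : ℕ} (π : Equiv.Perm (Fin p)) (r : Fin p → ℕ) : Finset ℕ :=
  (Finset.Icc 1 (p - 1)).filter (IsDescZk π r)

/-- `D(τ) = D₁(τ) ∪ {p}` if `r(π_p) > 0`, else `D₁(τ)`. -/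
def DZk {p : ℕ} (hp : 0 < p) (π : Equiv.Perm (Fin p)) (r : Fin p → ℕ) : Finset ℕ :=
  if r (π ⟨p - 1, Nat.sub_lt hp Nat.one_pos⟩) = 0 then D1Zk π r else insert p (D1Zk π r)

/-- `des_s(τ) = |D(τ)|`. -/
def desZk {p : ℕ} (hp : 0 < p) (π : Equiv.Perm (Fin p)) (r : Fin p → ℕ) : ℕ :=
  (DZk hp π r).card

/-- `fmaj(τ) = |r| + k · comaj(τ)`, where `comaj(τ) = ∑_{i ∈ D(τ)} (p - i)`. -/
def fmajZk {p : ℕ} (hp : 0 < p) (k : ℕ) (π : Equiv.Perm (Fin p)) (r : Fin p → ℕ) : ℕ :=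
  (∑ x, r x) + k * ∑ i ∈ DZk hp π r, (p - i)

open Finset PowerSeries

section MonotoneSequences

def monotoneBounded (p m : ℕ) : Finset (Fin p → ℕ) :=
  (Fintype.piFinset fun _ => range (m + 1)).filter Monotone

lemma mem_monotoneBounded {p m : ℕ} {h : Fin p → ℕ} :
    h ∈ monotoneBounded p m ↔ Monotone h ∧ ∀ i, h i ≤ m := by
  simp [monotoneBounded, and_comm]

lemma Fin.monotone_snoc_iff {p : ℕ} {α : Type*} [Preorder α] {g : Fin p → α} {m : α} :
    Monotone (Fin.snoc g m : Fin (p + 1) → α) ↔ Monotone g ∧ ∀ i, g i ≤ m := by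
  refine ⟨fun h => ⟨fun i j hij => ?_, fun i => ?_⟩, fun ⟨hg, hm⟩ => ?_⟩
  · simpa using h (Fin.castSucc_le_castSucc_iff.2 hij)
  · simpa using h (Fin.le_last (Fin.castSucc i))
  · intro a b hab
    induction b using Fin.lastCases with
    | last => induction a using Fin.lastCases <;> simp [hm]
    | cast j =>
      induction a using Fin.lastCases with
      | last => exact absurd hab (Fin.castSucc_lt_last j).not_ge
      | cast i => simpa using hg (Fin.castSucc_le_castSucc_iff.1 hab)

variable {R : Type*} [CommSemiring R] (x : R)

lemma sum_monotoneBounded_succ (p n : ℕ) :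
    ∑ h ∈ monotoneBounded (p + 1) n, x ^ ∑ i, h i =
      ∑ m ∈ range (n + 1), x ^ m * ∑ h ∈ monotoneBounded p m, x ^ ∑ i, h i := by
  rw [← sum_fiberwise_of_maps_to (g := fun h => h (Fin.last p)) (t := range (n + 1))
    fun h hh => mem_range_succ_iff.2 ((mem_monotoneBounded.1 hh).2 _)]
  refine sum_congr rfl fun m hm => ?_
  rw [mul_sum]
  refine sum_nbij' Fin.init (Fin.snoc · m) (fun h hh => ?_) (fun g hg => ?_)
    (fun h hh => ?_) (fun g _ => Fin.init_snoc _ _) (fun h hh => ?_)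
  · simp only [mem_filter, mem_monotoneBounded] at hh ⊢
    obtain ⟨⟨hmono, -⟩, rfl⟩ := hh
    exact ⟨hmono.comp Fin.strictMono_castSucc.monotone, fun i => hmono (Fin.le_last _)⟩
  · simp only [mem_filter, mem_monotoneBounded, Fin.monotone_snoc_iff, Fin.snoc_last,
      and_true] at hg ⊢
    refine ⟨hg, fun i => ?_⟩
    induction i using Fin.lastCases with
    | last => simpa [Nat.lt_succ_iff] using hm
    | cast i => simpa using (hg.2 i).trans (mem_range_succ_iff.1 hm)
  · simp only [mem_filter] at hh
    rw [← hh.2, Fin.snoc_init_self]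
  · simp only [mem_filter] at hh
    rw [Fin.sum_univ_castSucc, hh.2, pow_add, mul_comm]
    rfl

def monotoneBoundedSeries (p : ℕ) : PowerSeries R :=
  PowerSeries.mk fun m => ∑ h ∈ monotoneBounded p m, x ^ ∑ i, h i

lemma monotoneBoundedSeries_zero : monotoneBoundedSeries x 0 = PowerSeries.mk 1 := by
  ext m
  have : monotoneBounded 0 m = {Fin.elim0} := by
    ext h
    simp [mem_monotoneBounded, Subsingleton.elim h Fin.elim0, Subsingleton.monotone]
  simp [monotoneBoundedSeries, this]

lemma monotoneBoundedSeries_succ (p : ℕ) :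
    monotoneBoundedSeries x (p + 1) = PowerSeries.mk 1 * rescale x (monotoneBoundedSeries x p) := by
  ext n
  rw [monotoneBoundedSeries, coeff_mk, sum_monotoneBounded_succ, coeff_mul,
    Nat.sum_antidiagonal_eq_sum_range_succ (fun i j => coeff i (PowerSeries.mk 1) * coeff j _),
    ← sum_range_reflect]
  refine sum_congr rfl fun m _ => ?_
  simp [coeff_rescale, monotoneBoundedSeries]

lemma PowerSeries.rescale_C (a b : R) : rescale a (C b) = C b := by
  ext n
  rcases n with _ | n <;> simp [coeff_rescale, coeff_C]

end MonotoneSequences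

lemma prod_one_sub_C_pow_mul_X_mul_monotoneBoundedSeries {R : Type*} [CommRing R] (x : R)
    (p : ℕ) : (∏ i ∈ range (p + 1), (1 - C (x ^ i) * X)) * monotoneBoundedSeries x p = 1 := by
  induction p with
  | zero =>
    rw [zero_add, prod_range_one, pow_zero, map_one, one_mul, monotoneBoundedSeries_zero, mul_comm,
      mk_one_mul_one_sub_eq_one]
  | succ p ih =>
    have hrescale : ∏ i ∈ range (p + 1), (1 - C (x ^ (i + 1)) * X) =
        rescale x (∏ i ∈ range (p + 1), (1 - C (x ^ i) * X)) := by
      rw [map_prod]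
      refine prod_congr rfl fun i _ => ?_
      rw [map_sub, map_one, map_mul, rescale_C, rescale_X, ← mul_assoc, ← map_mul, pow_succ]
    rw [prod_range_succ', hrescale, monotoneBoundedSeries_succ, pow_zero, map_one, one_mul]
    calc rescale x (∏ i ∈ range (p + 1), (1 - C (x ^ i) * X)) * (1 - X) *
          (PowerSeries.mk 1 * rescale x (monotoneBoundedSeries x p))
        = rescale x ((∏ i ∈ range (p + 1), (1 - C (x ^ i) * X)) * monotoneBoundedSeries x p) *
            (PowerSeries.mk 1 * (1 - X)) := by rw [map_mul]; ring
      _ = 1 := by rw [ih, map_one, mk_one_mul_one_sub_eq_one, mul_one]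

namespace IsDescZk

variable {p : ℕ} {σ : Equiv.Perm (Fin p)} {r : Fin p → ℕ} {i : ℕ}

lemma one_le (h : IsDescZk σ r i) : 1 ≤ i := by
  obtain ⟨_, _, h⟩ := h
  refine Nat.one_le_iff_ne_zero.2 fun hi => ?_
  subst hi
  simp at h

lemma lt (h : IsDescZk σ r i) : i < p := h.2.1

end IsDescZk

lemma D1Zk_eq_filter_range {p : ℕ} (σ : Equiv.Perm (Fin p)) (r : Fin p → ℕ) :
    D1Zk σ r = (range p).filter (IsDescZk σ r) := by
  ext i
  simp only [D1Zk, mem_filter, mem_Icc, mem_range]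
  exact ⟨fun ⟨_, hd⟩ => ⟨hd.lt, hd⟩, fun ⟨_, hd⟩ => ⟨⟨hd.one_le, by have := hd.lt; omega⟩, hd⟩⟩

section Descents

variable {p : ℕ} (σ : Equiv.Perm (Fin (p + 1))) (r : Fin (p + 1) → ℕ)

lemma isDescZk_succ_iff (a : Fin p) :
    IsDescZk σ r (a + 1) ↔
      toLex (r (σ a.succ), σ a.succ) < toLex (r (σ a.castSucc), σ a.castSucc) := by
  have h1 : (a : ℕ) + 1 - 1 < p + 1 := by omega
  have h2 : (a : ℕ) + 1 < p + 1 := by omega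
  have hcs : ∀ h, (⟨(a : ℕ) + 1 - 1, h⟩ : Fin (p + 1)) = a.castSucc := fun _ => Fin.ext (by simp)
  have hs : ∀ h, (⟨(a : ℕ) + 1, h⟩ : Fin (p + 1)) = a.succ := fun _ => Fin.ext (by simp)
  simp only [IsDescZk, h1, h2, exists_true_left, hcs, hs, Prod.Lex.toLex_lt_toLex]
  rcases (σ.injective.ne (Fin.castSucc_lt_succ : a.castSucc < a.succ).ne).lt_or_gt with h | h
  · simp [h, h.not_gt]
  · simp [h, h.not_gt, le_iff_lt_or_eq, eq_comm]

/-- The gap `i ∈ D₁` lies between the 0-based positions `i - 1` and `i`, so this counts the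
descents to the left of position `c`. -/
def descentsUpTo (c : Fin (p + 1)) : ℕ := Nat.count (IsDescZk σ r) (c + 1)

lemma descentsUpTo_zero : descentsUpTo σ r 0 = 0 := by
  have : ¬IsDescZk σ r 0 := fun h => by simpa using h.one_le
  simp [descentsUpTo, Nat.count_succ, this]

lemma descentsUpTo_succ (a : Fin p) :
    descentsUpTo σ r a.succ =
      descentsUpTo σ r a.castSucc + if IsDescZk σ r (a + 1) then 1 else 0 := by
  simp [descentsUpTo, Nat.count_succ]

lemma descentsUpTo_last : descentsUpTo σ r (Fin.last p) = #(D1Zk σ r) := by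
  rw [descentsUpTo, Fin.val_last, Nat.count_eq_card_filter_range, D1Zk_eq_filter_range]

lemma sum_descentsUpTo : ∑ c, descentsUpTo σ r c = ∑ i ∈ D1Zk σ r, (p + 1 - i) := by
  calc ∑ c, descentsUpTo σ r c = ∑ c ∈ range (p + 1), #{i ∈ D1Zk σ r | i ≤ c} := by
        rw [← Fin.sum_univ_eq_sum_range (fun c => #{i ∈ D1Zk σ r | i ≤ c})]
        refine sum_congr rfl fun c _ => ?_
        rw [descentsUpTo, Nat.count_eq_card_filter_range, D1Zk_eq_filter_range, filter_filter]
        congr 1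
        ext i
        simp only [mem_filter, mem_range]
        have := c.isLt
        exact ⟨fun ⟨hi, hd⟩ => ⟨by omega, hd, by omega⟩, fun ⟨_, hd, hi⟩ => ⟨by omega, hd⟩⟩
    _ = ∑ i ∈ D1Zk σ r, #{c ∈ range (p + 1) | i ≤ c} := by
        simp_rw [card_filter]
        exact sum_comm
    _ = ∑ i ∈ D1Zk σ r, (p + 1 - i) := by
        refine sum_congr rfl fun i _ => ?_
        rw [← Nat.card_Ico]
        congr 1
        ext c
        simp only [mem_filter, mem_range, mem_Ico]
        omega

lemma add_one_notMem_D1Zk : p + 1 ∉ D1Zk σ r := by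
  rw [D1Zk_eq_filter_range]
  simp

lemma DZk_eq : DZk p.succ_pos σ r =
    if r (σ (Fin.last p)) = 0 then D1Zk σ r else insert (p + 1) (D1Zk σ r) := by
  rw [DZk]
  congr 3

lemma desZk_eq :
    desZk p.succ_pos σ r = #(D1Zk σ r) + if r (σ (Fin.last p)) = 0 then 0 else 1 := by
  rw [desZk, DZk_eq]
  split_ifs
  · rfl
  · exact card_insert_of_notMem (add_one_notMem_D1Zk σ r)

lemma sum_DZk_sub_eq_sum_D1Zk_sub :
    ∑ i ∈ DZk p.succ_pos σ r, (p + 1 - i) = ∑ i ∈ D1Zk σ r, (p + 1 - i) := by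
  rw [DZk_eq]
  split_ifs
  · rfl
  · rw [sum_insert (add_one_notMem_D1Zk σ r), Nat.sub_self, zero_add]

end Descents

lemma Tuple.sort_eq_of_strictMono {n : ℕ} {α : Type*} [LinearOrder α] {f : Fin n → α}
    {σ : Equiv.Perm (Fin n)} (h : StrictMono (f ∘ σ)) : Tuple.sort f = σ :=
  (Tuple.eq_sort_iff.2 ⟨h.monotone, fun _ _ hij heq => absurd heq (h hij).ne⟩).symm

section Key

variable {p : ℕ} (g r : Fin p → ℕ)

def wreathKey (j : Fin p) : Lex (ℕ × Lex (ℕ × Fin p)) := toLex (g j, toLex (r j, j))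

lemma wreathKey_injective : Function.Injective (wreathKey g r) := fun i j h => by
  simp only [wreathKey, toLex_inj, Prod.mk.injEq] at h
  exact h.2.2

lemma strictMono_wreathKey_sort : StrictMono (wreathKey g r ∘ Tuple.sort (wreathKey g r)) :=
  (Tuple.monotone_sort _).strictMono_of_injective
    ((wreathKey_injective g r).comp (Equiv.injective _))

lemma monotone_of_monotone_wreathKey_div {k : ℕ} {f : Fin p → ℕ} {σ : Equiv.Perm (Fin p)}
    (h : Monotone (wreathKey (fun j => f j / k) r ∘ σ)) (hfr : ∀ j, f j % k = r j) :
    Monotone (f ∘ σ) := by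
  intro a b hab
  have hkey := h hab
  simp only [Function.comp, wreathKey, Prod.Lex.toLex_le_toLex, ← hfr] at hkey
  rcases hkey with hlt | ⟨heq, hmod⟩
  · exact (Nat.lt_of_div_lt_div hlt).le
  · have : f (σ a) % k ≤ f (σ b) % k := hmod.elim le_of_lt (fun h => h.1.le)
    rw [Function.comp_apply, Function.comp_apply, ← Nat.div_add_mod (f (σ a)) k,
      ← Nat.div_add_mod (f (σ b)) k, heq]
    omega

end Key

section SortedKey

variable {p : ℕ} {g r : Fin (p + 1) → ℕ} {σ : Equiv.Perm (Fin (p + 1))}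

lemma strictMono_wreathKey_iff :
    StrictMono (wreathKey g r ∘ σ) ↔
      ∀ a : Fin p, g (σ a.castSucc) + (if IsDescZk σ r (a + 1) then 1 else 0) ≤ g (σ a.succ) := by
  rw [Fin.strictMono_iff_lt_succ]
  refine forall_congr' fun a => ?_
  simp only [Function.comp, wreathKey, Prod.Lex.toLex_lt_toLex, isDescZk_succ_iff]
  have hne : σ a.castSucc ≠ σ a.succ := σ.injective.ne (Fin.castSucc_lt_succ : _ < a.succ).ne
  rcases hne.lt_or_gt with h | h
  · simp only [h, h.not_gt, and_true, and_false, or_false]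
    split_ifs <;> omega
  · simp only [h, h.not_gt, and_true, and_false, or_false]
    split_ifs <;> omega

lemma descentsUpTo_le_of_strictMono (h : StrictMono (wreathKey g r ∘ σ)) (c : Fin (p + 1)) :
    descentsUpTo σ r c ≤ g (σ c) := by
  induction c using Fin.induction with
  | zero => simp [descentsUpTo_zero]
  | succ a ih =>
    have := strictMono_wreathKey_iff.1 h a
    rw [descentsUpTo_succ]
    omega

end SortedKey

lemma Nat.mul_add_le_mul_iff {k g r n : ℕ} (hr : r < k) :
    k * g + r ≤ k * n ↔ g + (if r = 0 then 0 else 1) ≤ n := by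
  split_ifs with h0
  · rw [h0, add_zero, add_zero, Nat.mul_le_mul_left_iff ((Nat.zero_le r).trans_lt hr)]
  · constructor
    · intro h
      by_contra! hn
      nlinarith [Nat.pos_of_ne_zero h0]
    · intro h
      nlinarith

section Encode

variable {p : ℕ}

def wreathEncode (k : ℕ) (σ : Equiv.Perm (Fin (p + 1))) (r h : Fin (p + 1) → ℕ)
    (j : Fin (p + 1)) : ℕ :=
  k * (h (σ.symm j) + descentsUpTo σ r (σ.symm j)) + r j

def wreathHeights (k : ℕ) (σ : Equiv.Perm (Fin (p + 1))) (r f : Fin (p + 1) → ℕ)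
    (c : Fin (p + 1)) : ℕ :=
  f (σ c) / k - descentsUpTo σ r c

variable {k : ℕ} {σ : Equiv.Perm (Fin (p + 1))} {r h f : Fin (p + 1) → ℕ}

lemma wreathEncode_mod (hr : ∀ j, r j < k) (j : Fin (p + 1)) :
    wreathEncode k σ r h j % k = r j := by
  rw [wreathEncode, Nat.mul_add_mod, Nat.mod_eq_of_lt (hr j)]

lemma wreathEncode_apply_div (hr : ∀ j, r j < k) (c : Fin (p + 1)) :
    wreathEncode k σ r h (σ c) / k = h c + descentsUpTo σ r c := by
  rw [wreathEncode, Nat.mul_add_div ((Nat.zero_le _).trans_lt (hr (σ c))),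
    Nat.div_eq_of_lt (hr (σ c)), add_zero, Equiv.symm_apply_apply]

lemma wreathHeights_wreathEncode (hr : ∀ j, r j < k) :
    wreathHeights k σ r (wreathEncode k σ r h) = h := by
  funext c
  rw [wreathHeights, wreathEncode_apply_div hr, Nat.add_sub_cancel]

lemma strictMono_wreathKey_wreathEncode (hr : ∀ j, r j < k) (hh : Monotone h) :
    StrictMono (wreathKey (fun j => wreathEncode k σ r h j / k) r ∘ σ) := by
  refine strictMono_wreathKey_iff.2 fun a => ?_
  simp only [wreathEncode_apply_div hr, descentsUpTo_succ]
  have := hh (Fin.castSucc_lt_succ : a.castSucc < a.succ).le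
  omega

lemma sum_wreathEncode :
    ∑ j, wreathEncode k σ r h j = k * ∑ c, h c + fmajZk p.succ_pos k σ r := by
  rw [fmajZk, sum_DZk_sub_eq_sum_D1Zk_sub, ← sum_descentsUpTo, ← Equiv.sum_comp σ,
    ← Equiv.sum_comp σ r]
  simp only [wreathEncode, Equiv.symm_apply_apply, sum_add_distrib, mul_add, mul_sum]
  ring

lemma wreathEncode_le_iff (hr : ∀ j, r j < k) (hh : Monotone h) (n : ℕ) :
    (∀ j, wreathEncode k σ r h j ≤ k * n) ↔ h (Fin.last p) + desZk p.succ_pos σ r ≤ n := by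
  have hmono : Monotone (wreathEncode k σ r h ∘ σ) :=
    monotone_of_monotone_wreathKey_div _
      (strictMono_wreathKey_wreathEncode hr hh).monotone (wreathEncode_mod hr)
  calc (∀ j, wreathEncode k σ r h j ≤ k * n) ↔ wreathEncode k σ r h (σ (Fin.last p)) ≤ k * n :=
        ⟨fun H => H _, fun H j => σ.apply_symm_apply j ▸ (hmono (Fin.le_last _)).trans H⟩
    _ ↔ h (Fin.last p) + desZk p.succ_pos σ r ≤ n := by
        rw [wreathEncode, Equiv.symm_apply_apply, descentsUpTo_last,
          Nat.mul_add_le_mul_iff (hr _), desZk_eq, add_assoc]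

lemma monotone_wreathHeights (hf : StrictMono (wreathKey (fun j => f j / k) r ∘ σ)) :
    Monotone (wreathHeights k σ r f) := by
  refine Fin.monotone_iff_le_succ.2 fun a => ?_
  have := strictMono_wreathKey_iff.1 hf a
  have := descentsUpTo_le_of_strictMono hf a.castSucc
  simp only [wreathHeights, descentsUpTo_succ]
  omega

lemma wreathEncode_wreathHeights (hf : StrictMono (wreathKey (fun j => f j / k) r ∘ σ))
    (hfr : ∀ j, f j % k = r j) : wreathEncode k σ r (wreathHeights k σ r f) = f := by
  funext j
  have := descentsUpTo_le_of_strictMono hf (σ.symm j)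
  simp only [wreathEncode, wreathHeights, Equiv.apply_symm_apply] at this ⊢
  rw [Nat.sub_add_cancel this, ← hfr, Nat.div_add_mod]

end Encode

section Class

variable {p k : ℕ}

def wreathClass (hk : 0 < k) (f : Fin p → ℕ) : Equiv.Perm (Fin p) × (Fin p → Fin k) :=
  (Tuple.sort (wreathKey (fun j => f j / k) (fun j => f j % k)),
    fun j => ⟨f j % k, Nat.mod_lt _ hk⟩)

lemma wreathClass_eq_iff (hk : 0 < k) (f : Fin p → ℕ)
    (τ : Equiv.Perm (Fin p) × (Fin p → Fin k)) :
    wreathClass hk f = τ ↔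
      StrictMono (wreathKey (fun j => f j / k) (fun j => τ.2 j) ∘ τ.1) ∧
        ∀ j, f j % k = τ.2 j := by
  constructor
  · rintro rfl
    exact ⟨strictMono_wreathKey_sort _ _, fun _ => rfl⟩
  · rintro ⟨hs, hc⟩
    have hcolor : (fun j => f j % k) = fun j => (τ.2 j : ℕ) := funext hc
    refine Prod.ext ?_ (funext fun j => Fin.ext (hc j))
    rw [wreathClass, hcolor]
    exact Tuple.sort_eq_of_strictMono hs

lemma wreathClass_wreathEncode (hk : 0 < k) {σ : Equiv.Perm (Fin (p + 1))}
    {ρ : Fin (p + 1) → Fin k} {h : Fin (p + 1) → ℕ} (hh : Monotone h) :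
    wreathClass hk (wreathEncode k σ (fun j => ρ j) h) = (σ, ρ) :=
  (wreathClass_eq_iff hk _ _).2 ⟨strictMono_wreathKey_wreathEncode (fun j => (ρ j).isLt) hh,
    wreathEncode_mod fun j => (ρ j).isLt⟩

lemma wreathEncode_wreathHeights_of_wreathClass_eq (hk : 0 < k) {f : Fin (p + 1) → ℕ}
    {τ : Equiv.Perm (Fin (p + 1)) × (Fin (p + 1) → Fin k)} (hf : wreathClass hk f = τ) :
    Monotone (wreathHeights k τ.1 (fun j => τ.2 j) f) ∧
      wreathEncode k τ.1 (fun j => τ.2 j) (wreathHeights k τ.1 (fun j => τ.2 j) f) = f :=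
  let ⟨hs, hfr⟩ := (wreathClass_eq_iff hk f τ).1 hf
  ⟨monotone_wreathHeights hs, wreathEncode_wreathHeights hs hfr⟩

variable {R : Type*} [CommSemiring R] (q : R) (n : ℕ)

lemma sum_wreathClass_fiber (hk : 0 < k) (τ : Equiv.Perm (Fin (p + 1)) × (Fin (p + 1) → Fin k)) :
    ∑ f ∈ Fintype.piFinset (fun _ : Fin (p + 1) => range (k * n + 1)) with wreathClass hk f = τ,
        q ^ ∑ j, f j =
      if desZk p.succ_pos τ.1 (fun j => τ.2 j) ≤ n then
        q ^ fmajZk p.succ_pos k τ.1 (fun j => τ.2 j) *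
          ∑ h ∈ monotoneBounded (p + 1) (n - desZk p.succ_pos τ.1 (fun j => τ.2 j)),
            (q ^ k) ^ ∑ c, h c
      else 0 := by
  obtain ⟨σ, ρ⟩ := τ
  dsimp only
  set r : Fin (p + 1) → ℕ := fun j => ρ j
  have hr : ∀ j, r j < k := fun j => (ρ j).isLt
  have decode : ∀ f ∈ {f ∈ Fintype.piFinset (fun _ : Fin (p + 1) => range (k * n + 1)) |
      wreathClass hk f = (σ, ρ)}, Monotone (wreathHeights k σ r f) ∧
        wreathEncode k σ r (wreathHeights k σ r f) = f ∧
        wreathHeights k σ r f (Fin.last p) + desZk p.succ_pos σ r ≤ n := by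
    intro f hf
    rw [mem_filter, Fintype.mem_piFinset] at hf
    obtain ⟨hmono, henc⟩ := wreathEncode_wreathHeights_of_wreathClass_eq hk hf.2
    refine ⟨hmono, henc, (wreathEncode_le_iff hr hmono n).1 fun j => ?_⟩
    rw [henc]
    exact mem_range_succ_iff.1 (hf.1 j)
  split_ifs with hdes
  · rw [mul_sum]
    refine sum_nbij' (wreathHeights k σ r) (wreathEncode k σ r) (fun f hf => ?_) (fun h hh => ?_)
      (fun f hf => (decode f hf).2.1) (fun h _ => wreathHeights_wreathEncode hr)
      (fun f hf => ?_)
    · obtain ⟨hmono, -, hlast⟩ := decode f hf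
      exact mem_monotoneBounded.2 ⟨hmono, fun c => (hmono (Fin.le_last c)).trans (by omega)⟩
    · obtain ⟨hmono, hbd⟩ := mem_monotoneBounded.1 hh
      have hle := (wreathEncode_le_iff (σ := σ) hr hmono n).2 (by have := hbd (Fin.last p); omega)
      exact mem_filter.2 ⟨Fintype.mem_piFinset.2 fun j => mem_range_succ_iff.2 (hle j),
        wreathClass_wreathEncode hk hmono⟩
    · conv_lhs => rw [← (decode f hf).2.1]
      rw [sum_wreathEncode, pow_add, pow_mul, mul_comm]
  · refine sum_eq_zero fun f hf => absurd ?_ hdes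
    have := (decode f hf).2.2
    omega

theorem sum_range_pow_eq_sum_wreath (hk : 0 < k) :
    (∑ j ∈ range (k * n + 1), q ^ j) ^ (p + 1) =
      ∑ τ : Equiv.Perm (Fin (p + 1)) × (Fin (p + 1) → Fin k),
        if desZk p.succ_pos τ.1 (fun j => τ.2 j) ≤ n then
          q ^ fmajZk p.succ_pos k τ.1 (fun j => τ.2 j) *
            ∑ h ∈ monotoneBounded (p + 1) (n - desZk p.succ_pos τ.1 (fun j => τ.2 j)),
              (q ^ k) ^ ∑ c, h c
        else 0 := by
  rw [sum_pow', ← sum_fiberwise _ (wreathClass hk)]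
  refine sum_congr rfl fun τ _ => ?_
  simp only [prod_pow_eq_pow_sum]
  exact sum_wreathClass_fiber q n hk τ

end Class

/-- Carlitz's formula for the wreath product `ℤ_k ≀ S_p` (Chow–Mansour):
`∑_{n ≥ 0} [kn+1]_q^p t^n = (∑_{τ ∈ ℤ_k ≀ S_p} t^{des_s(τ)} q^{fmaj(τ)}) / ∏_{i=0}^p (1 - t q^{ki})`,
stated multiplied through by `∏_{i=0}^p (1 - t q^{ki})`, as a power series in `t` over `ℤ[q]`. -/
theorem carlitz_wreath_product (p k : ℕ) (hp : 0 < p) (hk : 0 < k) :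
    (∏ i ∈ Finset.range (p + 1),
        ((1 : PowerSeries (Polynomial ℤ)) -
          PowerSeries.C ((Polynomial.X : Polynomial ℤ) ^ (k * i)) *
            PowerSeries.X)) *
      PowerSeries.mk (fun n =>
        (∑ j ∈ Finset.range (k * n + 1), (Polynomial.X : Polynomial ℤ) ^ j) ^ p) =
    ∑ τ ∈ (Finset.univ : Finset (Equiv.Perm (Fin p) × (Fin p → Fin k))),
      PowerSeries.C
          ((Polynomial.X : Polynomial ℤ) ^ fmajZk hp k τ.1 fun x => (τ.2 x : ℕ)) *
        PowerSeries.X ^ desZk hp τ.1 fun x => (τ.2 x : ℕ) := by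
  obtain ⟨p, rfl⟩ := Nat.exists_eq_add_one_of_ne_zero hp.ne'
  set S := ∑ τ ∈ (Finset.univ : Finset (Equiv.Perm (Fin (p + 1)) × (Fin (p + 1) → Fin k))),
      PowerSeries.C
          ((Polynomial.X : Polynomial ℤ) ^ fmajZk hp k τ.1 fun x => (τ.2 x : ℕ)) *
        PowerSeries.X ^ desZk hp τ.1 fun x => (τ.2 x : ℕ)
  have hseries : PowerSeries.mk (fun n =>
      (∑ j ∈ Finset.range (k * n + 1), (Polynomial.X : Polynomial ℤ) ^ j) ^ (p + 1)) =
      S * monotoneBoundedSeries (Polynomial.X ^ k) (p + 1) := by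
    ext n
    simp only [coeff_mk, sum_range_pow_eq_sum_wreath _ _ hk, S, sum_mul, map_sum, mul_assoc,
      coeff_C_mul, coeff_X_pow_mul', monotoneBoundedSeries, mul_ite, mul_zero]
  simp_rw [pow_mul, hseries, mul_left_comm _ S, prod_one_sub_C_pow_mul_X_mul_monotoneBoundedSeries,
    mul_one]
end
end
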